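/- arXiv:1106.0793 — 3 statements merged into one kernel-verified Lean document; each statement's English description precedes it below -/
import Mathlib

section
/- Fix integers k ≥ 2 and n ≥ 1. Let F_{k,n} be the family of k-term arithmetic progressions {a, a+d, ..., a+(k-1)d} contained in {1,2,...,n} whose common difference d satisfies n/k ≤ d < n/(k-1). Then F_{k,n} is an almost disjoint family: any two distinct progressions P, Q ∈ F_{k,n} satisfy |P ∩ Q| ≤ 1. -/
/-- The `k`-term arithmetic progression `{a, a+d, ..., a+(k-1)d}` as a finite set. -/
def AP (a d k : ℕ) : Finset ℕ := (Finset.range k).image (fun i => a + i * d)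

open Finset in
/-- `Fkn k n` is the family of `k`-term arithmetic progressions contained in
`{1, ..., n}` whose common difference `d` satisfies `n/k ≤ d < n/(k-1)`. -/
noncomputable def Fkn (k n : ℕ) : Finset (Finset ℕ) :=
  ((Finset.Icc 1 n ×ˢ Finset.Icc 1 n).filter
      (fun p => p.1 + (k - 1) * p.2 ≤ n ∧ (n : ℝ) / (k : ℝ) ≤ (p.2 : ℝ) ∧
        (p.2 : ℝ) < (n : ℝ) / ((k : ℝ) - 1))).image (fun p => AP p.1 p.2 k)

/-!
Two common points `x < y` of `AP a d k` and `AP a' d' k` give `y = x + p * d = x + q * d'` with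
`0 < p, q < k`. Both differences lie in the window `n / k ≤ d < n / (k - 1)`, so `d' / d` lies
strictly between `(k - 1) / k` and `k / (k - 1)`, while any ratio `p / q ≠ 1` of positive integers
below `k` lies outside that interval; hence `p = q` and `d = d'`. The window also forces
`1 ≤ a ≤ d`, so the starting point is recovered from any member `x` as `1 + (x - 1) % d`,
and `a = a'`.
-/

section
variable {a d k x y : ℕ}

theorem mem_AP : x ∈ AP a d k ↔ ∃ i < k, a + i * d = x := by
  simp [AP]

theorem AP.exists_eq_add_mul_of_lt (hx : x ∈ AP a d k) (hy : y ∈ AP a d k) (hxy : x < y) :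
    ∃ p, 0 < p ∧ p < k ∧ y = x + p * d := by
  obtain ⟨i, hik, rfl⟩ := mem_AP.1 hx
  obtain ⟨j, hjk, rfl⟩ := mem_AP.1 hy
  have hij : i < j := by
    by_contra! hji
    have := Nat.mul_le_mul_right d hji
    omega
  refine ⟨j - i, by omega, by omega, ?_⟩
  rw [Nat.sub_mul, ← Nat.add_sub_assoc (Nat.mul_le_mul_right d hij.le)]
  omega

theorem AP.sub_one_mod (ha : 1 ≤ a) (had : a ≤ d) (hx : x ∈ AP a d k) :
    (x - 1) % d = a - 1 := by
  obtain ⟨i, -, rfl⟩ := mem_AP.1 hx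
  rw [show a + i * d - 1 = a - 1 + i * d by omega, Nat.add_mul_mod_self_right,
    Nat.mod_eq_of_lt (by omega)]

end

theorem le_of_mul_eq_mul_of_sub_one_mul_lt {k p q d d' : ℕ} (hp : p < k)
    (hd : (k - 1) * d < k * d') (h : p * d = q * d') : q ≤ p := by
  by_contra! hpq
  obtain ⟨m, rfl⟩ : ∃ m, k = m + 1 := ⟨k - 1, by omega⟩
  simp only [Nat.add_sub_cancel] at hd
  have hpm : (m + 1) * p ≤ (p + 1) * m := by nlinarith
  have : (m + 1) * (p * d) < (m + 1) * (p * d) := calc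
    (m + 1) * (p * d) ≤ ((p + 1) * m) * d := by rw [← mul_assoc]; gcongr
    _ = (p + 1) * (m * d) := by ring
    _ < (p + 1) * ((m + 1) * d') := by gcongr
    _ = (m + 1) * ((p + 1) * d') := by ring
    _ ≤ (m + 1) * (q * d') := by gcongr; omega
    _ = (m + 1) * (p * d) := by rw [h]
  exact lt_irrefl _ this

theorem sub_one_mul_lt_and_le_mul {k n d : ℕ} (hlo : (n : ℝ) / k ≤ d)
    (hhi : (d : ℝ) < n / ((k : ℝ) - 1)) : (k - 1) * d < n ∧ n ≤ k * d := by
  rcases k with _ | m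
  · have : (n : ℝ) / ((0 : ℕ) - 1 : ℝ) ≤ 0 := by
      simp only [Nat.cast_zero, zero_sub, div_neg, div_one, neg_nonpos, Nat.cast_nonneg]
    linarith [(d.cast_nonneg : (0 : ℝ) ≤ d)]
  · push_cast at hlo hhi
    rw [add_sub_cancel_right] at hhi
    rcases m.eq_zero_or_pos with rfl | hm
    · simp only [CharP.cast_eq_zero, div_zero] at hhi
      linarith [(d.cast_nonneg : (0 : ℝ) ≤ d)]
    rw [div_le_iff₀ (by positivity)] at hlo
    rw [lt_div_iff₀ (by positivity)] at hhi
    simp only [Nat.add_sub_cancel]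
    constructor
    · exact_mod_cast (by linarith : (m : ℝ) * d < n)
    · exact_mod_cast (by linarith : (n : ℝ) ≤ (m + 1) * d)

theorem AP_eq_of_two_common {a d a' d' k x y : ℕ}
    (hdd' : (k - 1) * d < k * d') (hd'd : (k - 1) * d' < k * d)
    (ha : 1 ≤ a) (had : a ≤ d) (ha' : 1 ≤ a') (had' : a' ≤ d')
    (hx : x ∈ AP a d k ∩ AP a' d' k) (hy : y ∈ AP a d k ∩ AP a' d' k) (hxy : x < y) :
    AP a d k = AP a' d' k := by
  rw [Finset.mem_inter] at hx hy
  obtain ⟨p, hp, hpk, rfl⟩ := AP.exists_eq_add_mul_of_lt hx.1 hy.1 hxy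
  obtain ⟨q, -, hqk, hq⟩ := AP.exists_eq_add_mul_of_lt hx.2 hy.2 hxy
  have hpq : p * d = q * d' := by omega
  obtain rfl : p = q := le_antisymm
    (le_of_mul_eq_mul_of_sub_one_mul_lt hqk hd'd hpq.symm)
    (le_of_mul_eq_mul_of_sub_one_mul_lt hpk hdd' hpq)
  obtain rfl : d = d' := Nat.eq_of_mul_eq_mul_left hp hpq
  have := AP.sub_one_mod ha had hx.1
  have := AP.sub_one_mod ha' had' hx.2
  obtain rfl : a = a' := by omega
  rfl

theorem exists_AP_of_mem_Fkn {k n : ℕ} {P : Finset ℕ} (hP : P ∈ Fkn k n) :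
    ∃ a d, 1 ≤ a ∧ a ≤ d ∧ (k - 1) * d < n ∧ n ≤ k * d ∧ AP a d k = P := by
  simp only [Fkn, Finset.mem_image, Finset.mem_filter, Finset.mem_product,
    Finset.mem_Icc] at hP
  obtain ⟨⟨a, d⟩, ⟨⟨⟨ha, -⟩, -⟩, hlen, hlo, hhi⟩, rfl⟩ := hP
  dsimp only at hlen hlo hhi
  obtain ⟨hlt, hle⟩ := sub_one_mul_lt_and_le_mul hlo hhi
  have hk : 0 < k := Nat.pos_of_ne_zero <| by
    rintro rfl
    simp only [zero_tsub, zero_mul] at hlt hle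
    omega
  have hkd : k * d = (k - 1) * d + d := by
    rw [Nat.sub_one_mul, Nat.sub_add_cancel (Nat.le_mul_of_pos_left d hk)]
  exact ⟨a, d, ha, by omega, hlt, hle, rfl⟩

theorem Fkn_almost_disjoint_general (k n : ℕ) :
    ∀ P ∈ Fkn k n, ∀ Q ∈ Fkn k n, P ≠ Q → (P ∩ Q).card ≤ 1 := by
  intro P hP Q hQ hPQ
  obtain ⟨a, d, ha, had, hdn, hnd, rfl⟩ := exists_AP_of_mem_Fkn hP
  obtain ⟨a', d', ha', had', hd'n, hnd', rfl⟩ := exists_AP_of_mem_Fkn hQ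
  have hdd' := hdn.trans_le hnd'
  have hd'd := hd'n.trans_le hnd
  refine Finset.card_le_one.2 fun x hx y hy => ?_
  by_contra hxy
  rcases Nat.lt_or_gt_of_ne hxy with hlt | hlt
  · exact hPQ (AP_eq_of_two_common hdd' hd'd ha had ha' had' hx hy hlt)
  · exact hPQ (AP_eq_of_two_common hdd' hd'd ha had ha' had' hy hx hlt)

/-- The family `F_{k,n}` is almost disjoint: any two distinct members
intersect in at most one element. -/
theorem Fkn_almost_disjoint (k n : ℕ) (hk : 2 ≤ k) (hn : 1 ≤ n) :
    ∀ P ∈ Fkn k n, ∀ Q ∈ Fkn k n, P ≠ Q → (P ∩ Q).card ≤ 1 :=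
  Fkn_almost_disjoint_general k n
end

section
/- Let s and k ≥ 2 be integers with s ≥ 2k, and let F be an almost disjoint family of k-element subsets of {1,...,s} with |F| ≤ 2^{k-1}. Then the number of functions c : {1,...,s} → {0,1} under which at least one member of F is monochromatic is at least |F| · 2^{s-k}. -/
/-!
Let `A_P` be the set of colorings under which `P` is monochromatic. Each `A_P` has
`2 · 2^(s-k)` elements, and two distinct members of `F` share at most one point, so a coloring in
`A_P ∩ A_Q` is determined by its values off `P ∪ Q`, at one point of `P` and at one point of `Q`
(the same point if `P` and `Q` meet), whence `|A_P ∩ A_Q| ≤ 4 · 2^(s-2k)`. Bonferroni's inequality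
gives `|⋃ A_P| ≥ 2|F| 2^(s-k) - binom(|F|, 2) · 4 · 2^(s-2k)`, and `|F| ≤ 2^(k-1)` makes the
subtracted term at most `|F| 2^(s-k)`.
-/

open Finset

theorem Finset.card_mul_le_card_biUnion_add_choose {ι β : Type*} [DecidableEq β]
    (S : Finset ι) (f : ι → Finset β) {a b : ℕ}
    (ha : ∀ i ∈ S, a ≤ #(f i)) (hb : ∀ i ∈ S, ∀ j ∈ S, i ≠ j → #(f i ∩ f j) ≤ b) :
    #S * a ≤ #(S.biUnion f) + (#S).choose 2 * b := by
  classical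
  induction S using Finset.induction_on with
  | empty => simp
  | @insert i S hi ih =>
    have ih := ih (fun j hj => ha j (mem_insert_of_mem hj))
      (fun j hj l hl => hb j (mem_insert_of_mem hj) l (mem_insert_of_mem hl))
    have hnew : #(f i ∩ S.biUnion f) ≤ #S * b := by
      rw [inter_biUnion]
      refine card_biUnion_le.trans (sum_le_card_nsmul _ _ _ fun j hj => ?_)
      exact hb i (mem_insert_self i S) j (mem_insert_of_mem hj) (by rintro rfl; exact hi hj)
    have hunion := card_union_add_card_inter (f i) (S.biUnion f)
    have hai := ha i (mem_insert_self i S)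
    rw [biUnion_insert, card_insert_of_notMem hi, Nat.choose_succ_succ, Nat.choose_one_right]
    nlinarith

theorem card_le_pow_of_eqOn {α β : Type*} [DecidableEq α] [Fintype β] {A : Finset (α → β)}
    (R : Finset α) (hA : ∀ c ∈ A, ∀ c' ∈ A, Set.EqOn c c' R → c = c') :
    #A ≤ Fintype.card β ^ #R := by
  calc #A ≤ #(univ : Finset (R → β)) :=
        card_le_card_of_injOn (fun c x => c x) (fun _ _ => mem_univ _)
          fun c hc c' hc' h => hA c hc c' hc' fun x hx => congrFun h ⟨x, hx⟩
    _ = Fintype.card β ^ #R := by simp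

variable {α β : Type*} [Fintype α] [DecidableEq α] [Fintype β] [DecidableEq β]

def monochromaticColorings (T : Finset α) : Finset (α → β) :=
  {c | ∀ x ∈ T, ∀ y ∈ T, c x = c y}

@[simp]
theorem mem_monochromaticColorings {T : Finset α} {c : α → β} :
    c ∈ monochromaticColorings T ↔ ∀ x ∈ T, ∀ y ∈ T, c x = c y := by
  simp [monochromaticColorings]

theorem card_mul_pow_le_card_monochromaticColorings {T : Finset α} (hT : T.Nonempty) :
    Fintype.card β * Fintype.card β ^ (Fintype.card α - #T) ≤
      #(monochromaticColorings (β := β) T) := by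
  obtain ⟨t, ht⟩ := hT
  let extend : β × ((Tᶜ : Finset α) → β) → α → β := fun p x =>
    if hx : x ∈ Tᶜ then p.2 ⟨x, hx⟩ else p.1
  have hextend : Function.Injective extend := by
    rintro ⟨b, g⟩ ⟨b', g'⟩ h
    have hb : b = b' := by simpa [extend, ht] using congrFun h t
    have hg : g = g' := funext fun x => by simpa [extend, mem_compl.mp x.2] using congrFun h x
    rw [hb, hg]
  calc Fintype.card β * Fintype.card β ^ (Fintype.card α - #T)
      = #(univ : Finset (β × ((Tᶜ : Finset α) → β))) := by simp
    _ ≤ #(monochromaticColorings T) :=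
        card_le_card_of_injOn extend (fun p _ => by simp_all [extend]) hextend.injOn

theorem card_inter_monochromaticColorings_le [Nonempty β] {S T : Finset α} {t t' : α}
    (ht : t ∈ S) (ht' : t' ∈ T) :
    #(monochromaticColorings S ∩ monochromaticColorings (β := β) T) ≤
      Fintype.card β ^ (#{t, t'} + (Fintype.card α - #(S ∪ T))) := by
  refine (card_le_pow_of_eqOn ({t, t'} ∪ (S ∪ T)ᶜ) ?_).trans ?_
  · intro c hc c' hc' h
    simp only [mem_inter, mem_monochromaticColorings] at hc hc'
    funext x
    by_cases hxS : x ∈ S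
    · rw [hc.1 x hxS t ht, hc'.1 x hxS t ht, h (by simp)]
    by_cases hxT : x ∈ T
    · rw [hc.2 x hxT t' ht', hc'.2 x hxT t' ht', h (by simp)]
    exact h (by simp [hxS, hxT])
  · refine Nat.pow_le_pow_right Fintype.card_pos ((card_union_le _ _).trans ?_)
    rw [card_compl]

theorem card_inter_monochromaticColorings_le_of_card_inter_le_one [Nonempty β]
    {S T : Finset α} {k : ℕ} (hk : 1 ≤ k) (hS : #S = k) (hT : #T = k) (hST : #(S ∩ T) ≤ 1)
    (hn : 2 * k ≤ Fintype.card α) :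
    #(monochromaticColorings S ∩ monochromaticColorings (β := β) T) ≤
      Fintype.card β ^ (Fintype.card α - 2 * k + 2) := by
  have hunion := card_union_add_card_inter S T
  rcases (S ∩ T).eq_empty_or_nonempty with hdisj | ⟨z, hz⟩
  · obtain ⟨t, ht⟩ : S.Nonempty := card_pos.mp (by omega)
    obtain ⟨t', ht'⟩ : T.Nonempty := card_pos.mp (by omega)
    refine (card_inter_monochromaticColorings_le ht ht').trans
      (Nat.pow_le_pow_right Fintype.card_pos ?_)
    have := card_le_two (a := t) (b := t')
    rw [hdisj, card_empty] at hunion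
    omega
  · have hSTz : #(S ∩ T) = 1 := le_antisymm hST (card_pos.mpr ⟨z, hz⟩)
    rw [mem_inter] at hz
    refine (card_inter_monochromaticColorings_le hz.1 hz.2).trans_eq (congrArg _ ?_)
    simp only [insert_eq_of_mem, mem_singleton, card_singleton]
    omega

theorem card_mul_pow_le_card_biUnion_monochromaticColorings {ι : Type*} (F : Finset ι)
    (T : ι → Finset α) {k : ℕ} (hk : 1 ≤ k) (hn : 2 * k ≤ Fintype.card α)
    (hT : ∀ i ∈ F, #(T i) = k) (hF : ∀ i ∈ F, ∀ j ∈ F, i ≠ j → #(T i ∩ T j) ≤ 1)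
    (hcard : #F ≤ 2 ^ (k - 1)) :
    #F * 2 ^ (Fintype.card α - k) ≤
      #(F.biUnion fun i => monochromaticColorings (β := Bool) (T i)) := by
  set n := Fintype.card α
  have hbonferroni := card_mul_le_card_biUnion_add_choose F
    (fun i => monochromaticColorings (β := Bool) (T i)) (a := 2 * 2 ^ (n - k))
    (b := 2 ^ (n - 2 * k + 2))
    (fun i hi => by
      have := card_mul_pow_le_card_monochromaticColorings (β := Bool)
        (card_pos.mp (by rw [hT i hi]; omega))
      rwa [hT i hi, Fintype.card_bool] at this)
    (fun i hi j hj hij => by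
      simpa using card_inter_monochromaticColorings_le_of_card_inter_le_one (β := Bool) hk
        (hT i hi) (hT j hj) (hF i hi j hj hij) hn)
  have hchoose : 2 * (#F).choose 2 ≤ #F * 2 ^ (k - 1) :=
    calc 2 * (#F).choose 2 ≤ #F * (#F - 1) := by
          rw [Nat.choose_two_right]; exact Nat.mul_div_le _ 2
      _ ≤ #F * 2 ^ (k - 1) := Nat.mul_le_mul_left _ ((Nat.sub_le _ _).trans hcard)
  have hpow : 2 ^ (n - 2 * k + 2) * 2 ^ (k - 1) = 2 * 2 ^ (n - k) := by
    rw [← pow_add, ← pow_succ']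
    congr 1
    omega
  nlinarith [Nat.mul_le_mul_right (2 ^ (n - 2 * k + 2)) hchoose]

/-- For an almost disjoint family `F` of `k`-element subsets of `{1,...,s}` with
`|F| ≤ 2^(k-1)` (and `s ≥ 2k`, `k ≥ 2`), the number of 2-colorings of `{1,...,s}`
under which some member of `F` is monochromatic is at least `|F| · 2^(s-k)`. -/
theorem card_colorings_some_mono (s k : ℕ) (hk : 2 ≤ k) (hs : 2 * k ≤ s)
    (F : Finset (Finset ℕ)) (hsub : ∀ P ∈ F, P ⊆ Finset.Icc 1 s)
    (hcard : ∀ P ∈ F, P.card = k)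
    (had : ∀ P ∈ F, ∀ Q ∈ F, P ≠ Q → (P ∩ Q).card ≤ 1)
    (hF : F.card ≤ 2 ^ (k - 1)) :
    F.card * 2 ^ (s - k) ≤
      Nat.card {c : ↥(Finset.Icc 1 s) → Bool //
        ∃ P ∈ F, ∀ x y : ↥(Finset.Icc 1 s), (x : ℕ) ∈ P → (y : ℕ) ∈ P → c x = c y} := by
  let T (P : Finset ℕ) : Finset (Finset.Icc 1 s) := P.subtype (· ∈ Finset.Icc 1 s)
  have hT : ∀ P ∈ F, #(T P) = k := fun P hP => by
    rw [card_subtype, filter_true_of_mem (hsub P hP), hcard P hP]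
  have hTT : ∀ P Q, #(T P ∩ T Q) ≤ #(P ∩ Q) := fun P Q => by
    rw [show T P ∩ T Q = T (P ∩ Q) by ext; simp [T], card_subtype]
    exact card_filter_le _ _
  have hunion : Nat.card {c : ↥(Finset.Icc 1 s) → Bool //
      ∃ P ∈ F, ∀ x y : ↥(Finset.Icc 1 s), (x : ℕ) ∈ P → (y : ℕ) ∈ P → c x = c y} =
      #(F.biUnion fun P => monochromaticColorings (β := Bool) (T P)) := by
    rw [Nat.card_eq_fintype_card, Fintype.card_subtype]
    congr 1
    ext c
    simp only [mem_filter, mem_univ, true_and, mem_biUnion, mem_monochromaticColorings, T,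
      mem_subtype]
    exact exists_congr fun P => and_congr_right fun _ =>
      ⟨fun h x hx y hy => h x y hx hy, fun h x y hx hy => h x hx y hy⟩
  have hsize : Fintype.card (Finset.Icc 1 s) = s := by simp
  have hbound := card_mul_pow_le_card_biUnion_monochromaticColorings F T (by omega)
    (by omega) hT (fun P hP Q hQ hPQ => (hTT P Q).trans (had P hP Q hQ hPQ)) hF
  rwa [hsize, ← hunion] at hbound
end

section
/- Let g : ℕ → ℝ be any function with g(k) > 0 for all k and g(k) → 0 as k → ∞, and set N⁻(k) = ⌊2^{k/2} · k^{1/2} · g(k)⌋. Then the proportion of 2-colorings c : {1,...,N⁻(k)} → {0,1} (out of the 2^{N⁻(k)} total) that contain a monochromatic k-term arithmetic progression tends to 0 as k → ∞. Equivalently, the probability that a uniformly random 2-coloring of {1,...,N⁻(k)} contains a monochromatic k-term arithmetic progression approaches 0 as k → ∞. -/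
/-- `P` is a `k`-term arithmetic progression contained in `{1, ..., n}`. -/
def IsKAP (n k : ℕ) (P : Finset ℕ) : Prop :=
  ∃ a d : ℕ, 1 ≤ a ∧ 1 ≤ d ∧ a + (k - 1) * d ≤ n ∧ P = AP a d k

/-- The coloring `c` of `{1, ..., n}` is constant on `P`. -/
def Mono {n : ℕ} (c : ↥(Finset.Icc 1 n) → Bool) (P : Finset ℕ) : Prop :=
  ∀ x y : ↥(Finset.Icc 1 n), (x : ℕ) ∈ P → (y : ℕ) ∈ P → c x = c y

/-- The coloring `c` of `{1, ..., n}` contains a monochromatic `k`-term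
arithmetic progression. -/
def HasMonoKAP (n k : ℕ) (c : ↥(Finset.Icc 1 n) → Bool) : Prop :=
  ∃ P : Finset ℕ, IsKAP n k P ∧ Mono c P

/-- `N⁻(k) = ⌊2^(k/2) k^(1/2) g(k)⌋`. -/
noncomputable def Nminus (g : ℕ → ℝ) (k : ℕ) : ℕ :=
  ⌊(2 : ℝ) ^ ((k : ℝ) / 2) * (k : ℝ) ^ ((1 : ℝ) / 2) * g k⌋₊

/-! Union bound. A fixed `k`-AP inside `{1, …, N}` is monochromatic for a `2^(1-k)` fraction of
the colorings, and such an AP is fixed by its start `a ≤ N` and difference `d ≤ N / (k - 1)`.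
So the proportion is at most `N² / ((k - 1) 2^(k-1))`, and `N = N⁻(k)` satisfies
`N² ≤ 2^k k g(k)²`, which bounds the proportion by `4 g(k)² → 0`. -/

open Finset Filter Topology
open scoped Classical

theorem card_constOn_mul_pow_le {α β : Type*} [Fintype α] [Fintype β] {t : Finset α}
    (ht : t.Nonempty) :
    #{c : α → β | ∀ x ∈ t, ∀ y ∈ t, c x = c y} * Fintype.card β ^ (#t - 1)
      ≤ Fintype.card β ^ Fintype.card α := by
  obtain ⟨x₀, hx₀⟩ := ht
  -- a coloring constant on `t` is determined by its values off `t` and its value at `x₀`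
  have hinj : #{c : α → β | ∀ x ∈ t, ∀ y ∈ t, c x = c y}
      ≤ Fintype.card β ^ (Fintype.card α - #t) * Fintype.card β := by
    calc _ ≤ #(univ : Finset ((↥tᶜ → β) × β)) := by
          refine card_le_card_of_injOn (fun c => (fun x => c x, c x₀))
            (fun _ _ => mem_coe.2 (mem_univ _)) ?_
          rintro c₁ h₁ c₂ h₂ h
          simp only [coe_filter, mem_univ, true_and, Set.mem_ofPred_eq, Prod.mk.injEq] at h₁ h₂ h
          funext x
          by_cases hx : x ∈ t
          · rw [h₁ x hx x₀ hx₀, h₂ x hx x₀ hx₀, h.2]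
          · exact congrFun h.1 ⟨x, mem_compl.2 hx⟩
      _ = _ := by simp
  calc _ ≤ Fintype.card β ^ (Fintype.card α - #t) * Fintype.card β * Fintype.card β ^ (#t - 1) :=
        Nat.mul_le_mul_right _ hinj
    _ = _ := by
      rw [mul_assoc, ← pow_succ', ← pow_add]
      have := card_le_univ t
      have := card_pos.2 ⟨x₀, hx₀⟩
      congr 1
      omega

theorem card_AP {d : ℕ} (hd : d ≠ 0) (a k : ℕ) : #(AP a d k) = k := by
  rw [AP, card_image_of_injective _ fun i j h => Nat.eq_of_mul_eq_mul_right
    (Nat.pos_of_ne_zero hd) (Nat.add_left_cancel h), card_range]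

theorem AP_subset_Icc {a d k n : ℕ} (ha : 1 ≤ a) (h : a + (k - 1) * d ≤ n) :
    AP a d k ⊆ Icc 1 n := by
  intro x hx
  obtain ⟨i, hi, rfl⟩ := mem_image.1 hx
  have : i * d ≤ (k - 1) * d := Nat.mul_le_mul_right d (by grind)
  exact mem_Icc.2 ⟨by omega, by omega⟩

theorem card_mono_mul_pow_le {n : ℕ} {P : Finset ℕ} (hP : P ⊆ Icc 1 n) (hne : P.Nonempty) :
    #{c : Icc 1 n → Bool | Mono c P} * 2 ^ (#P - 1) ≤ 2 ^ n := by
  have ht : #(P.subtype (· ∈ Icc 1 n)) = #P := by rw [card_subtype, filter_true_of_mem hP]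
  have hmono : ∀ c : Icc 1 n → Bool,
      Mono c P ↔ ∀ x ∈ P.subtype (· ∈ Icc 1 n), ∀ y ∈ P.subtype (· ∈ Icc 1 n), c x = c y := by
    simp only [Mono, mem_subtype]
    exact fun c => ⟨fun h x hx y hy => h x y hx hy, fun h x y hx hy => h x hx y hy⟩
  obtain ⟨x, hx⟩ := hne
  have := card_constOn_mul_pow_le (β := Bool) (t := P.subtype (· ∈ Icc 1 n))
    ⟨⟨x, hP hx⟩, mem_subtype.2 hx⟩
  rw [Fintype.card_bool, Fintype.card_coe, Nat.card_Icc, add_tsub_cancel_right, ht] at this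
  convert this using 3
  ext c
  simpa only [mem_filter, mem_univ, true_and] using hmono c

/-- Start and difference `(a, d)` of the `k`-APs in `{1, …, n}`, inside a box of size
`n * (n / (k - 1))`. -/
def kapParams (n k : ℕ) : Finset (ℕ × ℕ) :=
  (Icc 1 n ×ˢ Icc 1 (n / (k - 1))).filter fun p => p.1 + (k - 1) * p.2 ≤ n

theorem card_kapParams_mul_le (n k : ℕ) : #(kapParams n k) * (k - 1) ≤ n ^ 2 := by
  calc #(kapParams n k) * (k - 1) ≤ n * (n / (k - 1)) * (k - 1) := by
        gcongr
        exact (card_filter_le _ _).trans_eq (by rw [card_product, Nat.card_Icc, Nat.card_Icc]; simp)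
    _ ≤ n ^ 2 := by rw [mul_assoc, sq]; exact Nat.mul_le_mul_left n (Nat.div_mul_le_self n _)

theorem HasMonoKAP.exists_kapParams {n k : ℕ} {c : Icc 1 n → Bool} (hk : 2 ≤ k)
    (h : HasMonoKAP n k c) : ∃ p ∈ kapParams n k, Mono c (AP p.1 p.2 k) := by
  obtain ⟨_, ⟨a, d, ha, hd, hle, rfl⟩, hmono⟩ := h
  refine ⟨(a, d), ?_, hmono⟩
  have hdle : d ≤ n / (k - 1) := (Nat.le_div_iff_mul_le (by omega)).2 (by nlinarith)
  simp only [kapParams, mem_filter, Finset.mem_product, mem_Icc]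
  exact ⟨⟨⟨ha, by nlinarith⟩, hd, hdle⟩, hle⟩

theorem card_hasMonoKAP_mul_le {n k : ℕ} (hk : 2 ≤ k) :
    #{c : Icc 1 n → Bool | HasMonoKAP n k c} * ((k - 1) * 2 ^ (k - 1)) ≤ n ^ 2 * 2 ^ n := by
  have hsub : ({c : Icc 1 n → Bool | HasMonoKAP n k c} : Finset _)
      ⊆ (kapParams n k).biUnion fun p => {c | Mono c (AP p.1 p.2 k)} := by
    intro c hc
    simpa using (mem_filter.1 hc).2.exists_kapParams hk
  have hmono : ∀ p ∈ kapParams n k, #{c : Icc 1 n → Bool | Mono c (AP p.1 p.2 k)} * 2 ^ (k - 1)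
      ≤ 2 ^ n := by
    intro p hp
    simp only [kapParams, mem_filter, Finset.mem_product, mem_Icc] at hp
    have hd : p.2 ≠ 0 := by omega
    simpa [card_AP hd] using card_mono_mul_pow_le (AP_subset_Icc hp.1.1.1 hp.2)
      (by rw [← card_pos, card_AP hd]; omega)
  calc _ ≤ (∑ p ∈ kapParams n k, #{c : Icc 1 n → Bool | Mono c (AP p.1 p.2 k)})
        * 2 ^ (k - 1) * (k - 1) := by
        rw [mul_comm (k - 1), ← mul_assoc]
        gcongr
        exact (card_le_card hsub).trans card_biUnion_le
    _ ≤ #(kapParams n k) * 2 ^ n * (k - 1) := by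
        rw [sum_mul]
        gcongr
        simpa using sum_le_sum hmono
    _ ≤ n ^ 2 * 2 ^ n := by
        rw [mul_right_comm]
        exact Nat.mul_le_mul_right _ (card_kapParams_mul_le n k)

theorem card_hasMonoKAP_div_le {n k : ℕ} (hk : 2 ≤ k) :
    (Nat.card {c : Icc 1 n → Bool // HasMonoKAP n k c} : ℝ) / 2 ^ n
      ≤ n ^ 2 / ((k - 1) * 2 ^ (k - 1)) := by
  rw [Nat.card_eq_fintype_card, Fintype.card_subtype,
    div_le_div_iff₀ (by positivity) (mul_pos (by norm_num; omega) (by positivity))]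
  have : ((k - 1 : ℕ) : ℝ) = k - 1 := by push_cast [show 1 ≤ k by omega]; ring
  rw [← this]
  exact_mod_cast card_hasMonoKAP_mul_le hk

theorem Nminus_sq_le (g : ℕ → ℝ) (k : ℕ) : (Nminus g k : ℝ) ^ 2 ≤ 2 ^ k * k * g k ^ 2 := by
  rcases Nat.eq_zero_or_pos (Nminus g k) with h | h
  · rw [h, Nat.cast_zero, zero_pow two_ne_zero]
    positivity
  have hx := Nat.floor_pos.1 h
  calc (Nminus g k : ℝ) ^ 2 ≤ ((2 : ℝ) ^ ((k : ℝ) / 2) * (k : ℝ) ^ ((1 : ℝ) / 2) * g k) ^ 2 :=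
        pow_le_pow_left₀ (Nat.cast_nonneg _) (Nat.floor_le (by linarith)) 2
    _ = 2 ^ k * k * g k ^ 2 := by
        rw [mul_pow, mul_pow, ← Real.rpow_mul_natCast (by norm_num),
          ← Real.rpow_mul_natCast (Nat.cast_nonneg _)]
        norm_num

theorem prob_mono_kap_tendsto_zero_general (g : ℕ → ℝ)
    (hg : Filter.Tendsto g Filter.atTop (nhds 0)) :
    Filter.Tendsto
      (fun k : ℕ =>
        (Nat.card {c : ↥(Finset.Icc 1 (Nminus g k)) → Bool //
            HasMonoKAP (Nminus g k) k c} : ℝ) / 2 ^ (Nminus g k))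
      Filter.atTop (nhds 0) := by
  have h4g : Tendsto (fun k => 4 * g k ^ 2) atTop (𝓝 0) := by
    simpa using (hg.pow 2).const_mul 4
  refine squeeze_zero' (Eventually.of_forall fun k => by positivity) ?_ h4g
  filter_upwards [eventually_ge_atTop 2] with k hk
  have hk' : (2 : ℝ) ≤ k := by exact_mod_cast hk
  have h2k : (2 : ℝ) ^ k = 2 * 2 ^ (k - 1) := by rw [← pow_succ']; congr 1; omega
  calc _ ≤ (Nminus g k : ℝ) ^ 2 / ((k - 1) * 2 ^ (k - 1)) := card_hasMonoKAP_div_le hk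
    _ ≤ 2 ^ k * k * g k ^ 2 / ((k - 1) * 2 ^ (k - 1)) :=
        div_le_div_of_nonneg_right (Nminus_sq_le g k) (mul_pos (by linarith) (by positivity)).le
    _ ≤ 4 * g k ^ 2 := by
        rw [div_le_iff₀ (mul_pos (by linarith) (by positivity)), h2k]
        have : 0 ≤ 2 ^ (k - 1) * g k ^ 2 := by positivity
        nlinarith

/-- If `g(k) → 0`, then the proportion of 2-colorings of `{1, ..., N⁻(k)}`
containing a monochromatic `k`-term arithmetic progression tends to `0`. -/
theorem prob_mono_kap_tendsto_zero (g : ℕ → ℝ) (hg0 : ∀ k, 0 < g k)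
    (hg : Filter.Tendsto g Filter.atTop (nhds 0)) :
    Filter.Tendsto
      (fun k : ℕ =>
        (Nat.card {c : ↥(Finset.Icc 1 (Nminus g k)) → Bool //
            HasMonoKAP (Nminus g k) k c} : ℝ) / 2 ^ (Nminus g k))
      Filter.atTop (nhds 0) :=
  prob_mono_kap_tendsto_zero_general g hg
end
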